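/- arXiv:2411.03851 — 3 statements merged into one kernel-verified Lean document; each statement's English description precedes it below -/
import Mathlib

section
/- For the Walker slice sampler on a finite state space {1,...,N} with exploration parameter k ∈ ℕ, k ≥ 1, and a strictly positive weight function π : {1,...,N} → ℝ_{>0}, the transition probabilities p_A(r|s) = (π(r)/k) · Σ_{ℓ=max{s,r}}^{min{s+k-1, r+k-1}} ( 1 / Σ_{j=max{1,ℓ-k+1}}^{ℓ} π(j) ) sum to one over the reachable neighborhood: for every state s with s + k - 1 ≤ N, setting r₀ = max{1, s-k+1}, one has Σ_{r=r₀}^{s+k-1} p_A(r|s) = 1. -/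
open Finset

/-- Walker slice sampler transition probability on the integer state space. -/
noncomputable def pA (k : ℤ) (π : ℤ → ℝ) (r s : ℤ) : ℝ :=
  (π r / k) * ∑ ℓ ∈ Finset.Icc (max s r) (min (s + k - 1) (r + k - 1)),
    (∑ j ∈ Finset.Icc (max 1 (ℓ - k + 1)) ℓ, π j)⁻¹

/-- The Walker slice transition probabilities sum to one over the reachable
neighborhood. -/
theorem walker_slice_sums_to_one (N k : ℤ) (hk : 1 ≤ k) (π : ℤ → ℝ)
    (hπ : ∀ j ∈ Finset.Icc (1 : ℤ) N, 0 < π j)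
    (s : ℤ) (hs1 : 1 ≤ s) (hsN : s + k - 1 ≤ N) :
    ∑ r ∈ Finset.Icc (max 1 (s - k + 1)) (s + k - 1), pA k π r s = 1 := by
  have hk0 : (k : ℝ) ≠ 0 := by
    have : (0:ℝ) < (k:ℝ) := by exact_mod_cast lt_of_lt_of_le one_pos hk
    exact ne_of_gt this
  have hswap : ∑ r ∈ Finset.Icc (max 1 (s - k + 1)) (s + k - 1), pA k π r s
      = ∑ ℓ ∈ Finset.Icc s (s + k - 1), ∑ r ∈ Finset.Icc (max 1 (ℓ - k + 1)) ℓ,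
          (π r / k) * (∑ j ∈ Finset.Icc (max 1 (ℓ - k + 1)) ℓ, π j)⁻¹ := by
    unfold pA
    simp_rw [Finset.mul_sum]
    refine Finset.sum_comm' ?_
    intro r ℓ
    simp only [Finset.mem_Icc]
    omega
  rw [hswap]
  have hinner : ∀ ℓ ∈ Finset.Icc s (s + k - 1),
      (∑ r ∈ Finset.Icc (max 1 (ℓ - k + 1)) ℓ,
        (π r / k) * (∑ j ∈ Finset.Icc (max 1 (ℓ - k + 1)) ℓ, π j)⁻¹) = 1 / k := by
    intro ℓ hℓ
    simp only [Finset.mem_Icc] at hℓ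
    have hS : 0 < ∑ j ∈ Finset.Icc (max 1 (ℓ - k + 1)) ℓ, π j := by
      refine Finset.sum_pos (fun j hj => hπ j ?_) ?_
      · simp only [Finset.mem_Icc] at hj ⊢; omega
      · refine Finset.nonempty_Icc.mpr ?_; omega
    rw [← Finset.sum_mul, ← Finset.sum_div]
    field_simp
  rw [Finset.sum_congr rfl hinner]
  rw [Finset.sum_const, Int.Icc_eq_finset_map]
  simp only [Finset.card_map]
  rw [Finset.card_range]
  have hcard : ((s + k - 1 + 1 - s).toNat : ℝ) = (k : ℝ) := by
    have : (s + k - 1 + 1 - s) = k := by ring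
    rw [this]
    exact_mod_cast Int.toNat_of_nonneg (by omega)
  rw [nsmul_eq_mul, hcard]
  field_simp
end

section
/- On a finite state space {1,...,N}, as the exploration parameter k → ∞, the Walker slice sampler transition probability converges to the normalized target distribution: for all states r, s, p_A^{(k)}(r|s) → π(r)/Z where Z = Σ_{j=1}^{N} π(j). (Here, once k ≥ N, the neighborhood sums are truncated at the boundary of the state space, i.e., all sums over j run over {1,...,N} intersected with the indicated index ranges.) -/
open Finset Filter

/-- Walker slice sampler transition probability, with the inner index range
truncated at the boundary of the state space {1,...,N}. -/
noncomputable def pAtrunc (N k : ℤ) (π : ℤ → ℝ) (r s : ℤ) : ℝ :=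
  (π r / k) * ∑ ℓ ∈ Finset.Icc (max s r) (min (s + k - 1) (r + k - 1)),
    (∑ j ∈ (Finset.Icc (max 1 (ℓ - k + 1)) ℓ) ∩ Finset.Icc 1 N, π j)⁻¹

lemma walker_aux (N : ℤ) (hN : 1 ≤ N) (π : ℤ → ℝ)
    (hπ : ∀ j ∈ Finset.Icc (1 : ℤ) N, 0 < π j)
    (r s : ℤ) (hr1 : 1 ≤ r) (hrN : r ≤ N) (hs1 : 1 ≤ s) (hsN : s ≤ N)
    (Z m₀ : ℝ) (hZ : Z = ∑ j ∈ Finset.Icc (1 : ℤ) N, π j)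
    (hm₀pos : 0 < m₀) (hm₀ : ∀ j ∈ Finset.Icc (1 : ℤ) N, m₀ ≤ π j)
    (k : ℤ) (hk : N ≤ k) :
    ‖pAtrunc N k π r s - π r / Z‖ ≤
      π r * (2 * (N : ℝ) * (m₀⁻¹ + Z⁻¹) + (((max s r : ℤ) : ℝ) - ((min s r : ℤ) : ℝ)) / Z)
        / (k : ℝ) := by
  have hZpos : 0 < Z := hZ ▸ Finset.sum_pos hπ ⟨1, by simp [hN]⟩
  have hk1 : (1 : ℤ) ≤ k := le_trans hN hk
  have hk0 : (0:ℝ) < (k:ℝ) := by exact_mod_cast hk1.trans_lt' (by norm_num)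
  have hπr : 0 < π r := hπ r (by simp [Finset.mem_Icc, hr1, hrN])
  set M := max s r with hM
  set m := min s r with hm
  have hM1 : 1 ≤ M := le_trans hr1 (le_max_right s r)
  have hMN : M ≤ N := max_le hsN hrN
  have hm1 : 1 ≤ m := le_min hs1 hr1
  have hmN : m ≤ N := le_trans (min_le_right s r) hrN
  have hmM : m ≤ M := min_le_max
  set g : ℤ → ℝ := fun ℓ =>
    (∑ j ∈ (Finset.Icc (max 1 (ℓ - k + 1)) ℓ) ∩ Finset.Icc 1 N, π j)⁻¹ with hg
  set I := Finset.Icc M (m + k - 1) with hI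
  set J := Finset.Icc N k with hJ
  -- pAtrunc in terms of g and I
  have hPA : pAtrunc N k π r s = (π r / k) * ∑ ℓ ∈ I, g ℓ := by
    rw [pAtrunc]
    congr 1
    · congr 1
      rw [hI]; congr 1; omega
  -- lower bound on inner sums
  have hglb : ∀ ℓ ∈ I, m₀ ≤ ∑ j ∈ (Finset.Icc (max 1 (ℓ - k + 1)) ℓ) ∩ Finset.Icc 1 N, π j := by
    intro ℓ hℓ
    rw [hI, Finset.mem_Icc] at hℓ
    have hjin : min ℓ N ∈ (Finset.Icc (max 1 (ℓ - k + 1)) ℓ) ∩ Finset.Icc 1 N := by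
      simp only [Finset.mem_inter, Finset.mem_Icc]
      omega
    calc m₀ ≤ π (min ℓ N) := hm₀ _ (by simp only [Finset.mem_Icc]; omega)
      _ ≤ _ := Finset.single_le_sum
          (fun j hj => (hπ j (Finset.mem_of_mem_inter_right hj)).le) hjin
  -- term bound
  have hterm : ∀ ℓ ∈ I, ‖g ℓ - Z⁻¹‖ ≤ m₀⁻¹ + Z⁻¹ := by
    intro ℓ hℓ
    have h1 := hglb ℓ hℓ
    have hgle : g ℓ ≤ m₀⁻¹ := by
      rw [hg]
      exact inv_anti₀ hm₀pos h1
    have hgnn : 0 ≤ g ℓ := by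
      rw [hg]
      exact inv_nonneg.mpr (le_trans hm₀pos.le h1)
    calc ‖g ℓ - Z⁻¹‖ ≤ ‖g ℓ‖ + ‖Z⁻¹‖ := norm_sub_le _ _
      _ = g ℓ + Z⁻¹ := by
          rw [Real.norm_eq_abs, Real.norm_eq_abs, abs_of_nonneg hgnn,
            abs_of_nonneg (inv_nonneg.mpr hZpos.le)]
      _ ≤ m₀⁻¹ + Z⁻¹ := by linarith
  -- terms in the middle vanish
  have hzero : ∀ ℓ ∈ I, ℓ ∉ I \ J → g ℓ - Z⁻¹ = 0 := by
    intro ℓ hℓI hℓ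
    have hℓJ : ℓ ∈ J := by
      by_contra h
      exact hℓ (Finset.mem_sdiff.mpr ⟨hℓI, h⟩)
    rw [hJ, Finset.mem_Icc] at hℓJ
    have hset : (Finset.Icc (max 1 (ℓ - k + 1)) ℓ) ∩ Finset.Icc 1 N = Finset.Icc 1 N := by
      ext x
      simp only [Finset.mem_inter, Finset.mem_Icc]
      omega
    rw [hg]
    simp only [hset, hZ, sub_self]
  -- cardinality bound
  have hcard : ((I \ J).card : ℝ) ≤ 2 * (N : ℝ) := by
    have hsub : I \ J ⊆ Finset.Icc M (N - 1) ∪ Finset.Icc (k + 1) (m + k - 1) := by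
      intro x hx
      simp only [hI, hJ, Finset.mem_sdiff, Finset.mem_Icc, Finset.mem_union, not_and,
        not_le] at hx ⊢
      omega
    have h1 := Finset.card_le_card hsub
    have h2 := Finset.card_union_le (Finset.Icc M (N - 1)) (Finset.Icc (k + 1) (m + k - 1))
    have e1 : (Finset.Icc M (N - 1)).card = (N - M).toNat := by
      rw [Int.card_Icc]; congr 1; ring
    have e2 : (Finset.Icc (k + 1) (m + k - 1)).card = (m - 1).toNat := by
      rw [Int.card_Icc]; congr 1; ring
    have h3 : (I \ J).card ≤ (N - M).toNat + (m - 1).toNat := by omega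
    have h4 : ((I \ J).card : ℝ) ≤ (((N - M).toNat + (m - 1).toNat : ℕ) : ℝ) := by
      exact_mod_cast h3
    refine h4.trans ?_
    have e3 : (((N - M).toNat : ℤ) : ℝ) = ((N : ℝ) - M) := by
      rw [Int.toNat_of_nonneg (by omega)]; push_cast; ring
    have e4 : (((m - 1).toNat : ℤ) : ℝ) = ((m : ℝ) - 1) := by
      rw [Int.toNat_of_nonneg (by omega)]; push_cast; ring
    push_cast at e3 e4 ⊢
    rw [e3, e4]
    have : (m : ℝ) ≤ N := by exact_mod_cast hmN
    have : (1 : ℝ) ≤ M := by exact_mod_cast hM1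
    linarith
  -- bound on the sum of deviations
  have hDev : ‖∑ ℓ ∈ I, (g ℓ - Z⁻¹)‖ ≤ 2 * (N : ℝ) * (m₀⁻¹ + Z⁻¹) := by
    rw [← Finset.sum_subset Finset.sdiff_subset hzero]
    calc ‖∑ ℓ ∈ I \ J, (g ℓ - Z⁻¹)‖ ≤ ∑ ℓ ∈ I \ J, ‖g ℓ - Z⁻¹‖ := norm_sum_le _ _
      _ ≤ (I \ J).card • (m₀⁻¹ + Z⁻¹) := Finset.sum_le_card_nsmul _ _ _
          (fun ℓ hℓ => hterm ℓ (Finset.mem_sdiff.mp hℓ).1)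
      _ = ((I \ J).card : ℝ) * (m₀⁻¹ + Z⁻¹) := nsmul_eq_mul _ _
      _ ≤ 2 * (N : ℝ) * (m₀⁻¹ + Z⁻¹) := by
          apply mul_le_mul_of_nonneg_right hcard
          positivity
  -- cardinality of I
  have hcardI : ((I.card : ℕ) : ℝ) = (k : ℝ) + (m : ℝ) - (M : ℝ) := by
    rw [hI, Int.card_Icc]
    have e : (m + k - 1 + 1 - M) = (k + m - M) := by ring
    rw [e]
    have : (((k + m - M).toNat : ℤ) : ℝ) = ((k : ℝ) + m - M) := by
      rw [Int.toNat_of_nonneg (by omega)]; push_cast; ring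
    push_cast at this ⊢
    linarith
  -- decomposition
  have hdec : (∑ ℓ ∈ I, g ℓ) - (k : ℝ) / Z
      = (∑ ℓ ∈ I, (g ℓ - Z⁻¹)) + ((m : ℝ) - (M : ℝ)) / Z := by
    rw [Finset.sum_sub_distrib, Finset.sum_const, nsmul_eq_mul, hcardI]
    field_simp
    ring
  have hSk : ‖(∑ ℓ ∈ I, g ℓ) - (k : ℝ) / Z‖
      ≤ 2 * (N : ℝ) * (m₀⁻¹ + Z⁻¹) + ((M : ℝ) - (m : ℝ)) / Z := by
    rw [hdec]
    calc ‖(∑ ℓ ∈ I, (g ℓ - Z⁻¹)) + ((m : ℝ) - (M : ℝ)) / Z‖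
        ≤ ‖∑ ℓ ∈ I, (g ℓ - Z⁻¹)‖ + ‖((m : ℝ) - (M : ℝ)) / Z‖ := norm_add_le _ _
      _ ≤ 2 * (N : ℝ) * (m₀⁻¹ + Z⁻¹) + ((M : ℝ) - (m : ℝ)) / Z := by
          refine add_le_add hDev (le_of_eq ?_)
          rw [Real.norm_eq_abs, abs_div, abs_of_pos hZpos, abs_sub_comm,
            abs_of_nonneg (by exact_mod_cast sub_nonneg.mpr hmM : (0:ℝ) ≤ (M:ℝ) - m)]
  -- final assembly
  have e : pAtrunc N k π r s - π r / Z = (π r / k) * ((∑ ℓ ∈ I, g ℓ) - (k : ℝ) / Z) := by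
    rw [hPA]
    field_simp
  rw [e, norm_mul, Real.norm_eq_abs, abs_of_pos (by positivity : (0:ℝ) < π r / k)]
  calc (π r / k) * ‖(∑ ℓ ∈ I, g ℓ) - (k : ℝ) / Z‖
      ≤ (π r / k) * (2 * (N : ℝ) * (m₀⁻¹ + Z⁻¹) + ((M : ℝ) - (m : ℝ)) / Z) :=
        mul_le_mul_of_nonneg_left hSk (by positivity)
    _ = π r * (2 * (N : ℝ) * (m₀⁻¹ + Z⁻¹) + (((M : ℤ) : ℝ) - ((m : ℤ) : ℝ)) / Z) / (k : ℝ) := by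
        ring

/-- As k → ∞, the Walker slice transition probability converges to the
normalized target distribution π(r)/Z. -/
theorem walker_slice_tendsto_stationary (N : ℤ) (hN : 1 ≤ N) (π : ℤ → ℝ)
    (hπ : ∀ j ∈ Finset.Icc (1 : ℤ) N, 0 < π j)
    (r s : ℤ) (hr : r ∈ Finset.Icc (1 : ℤ) N) (hs : s ∈ Finset.Icc (1 : ℤ) N) :
    Tendsto (fun k : ℕ => pAtrunc N (k : ℤ) π r s) atTop
      (nhds (π r / ∑ j ∈ Finset.Icc (1 : ℤ) N, π j)) := by
  obtain ⟨hr1, hrN⟩ := Finset.mem_Icc.mp hr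
  obtain ⟨hs1, hsN⟩ := Finset.mem_Icc.mp hs
  have hne : (Finset.Icc (1 : ℤ) N).Nonempty := ⟨1, by simp [hN]⟩
  set Z : ℝ := ∑ j ∈ Finset.Icc (1 : ℤ) N, π j with hZ
  set m₀ : ℝ := (Finset.Icc (1 : ℤ) N).inf' hne π with hm₀def
  have hm₀pos : 0 < m₀ := by
    rw [hm₀def, Finset.lt_inf'_iff]
    exact hπ
  have hm₀ : ∀ j ∈ Finset.Icc (1 : ℤ) N, m₀ ≤ π j := fun j hj => Finset.inf'_le π hj
  set C : ℝ := π r * (2 * (N : ℝ) * (m₀⁻¹ + Z⁻¹)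
    + (((max s r : ℤ) : ℝ) - ((min s r : ℤ) : ℝ)) / Z) with hC
  have key : ∀ k : ℕ, N.toNat ≤ k → ‖pAtrunc N (k : ℤ) π r s - π r / Z‖ ≤ C / (k : ℝ) := by
    intro k hk
    have := walker_aux N hN π hπ r s hr1 hrN hs1 hsN Z m₀ hZ hm₀pos hm₀ (k : ℤ) (by omega)
    rw [hC]
    exact_mod_cast this
  have h1 : Tendsto (fun k : ℕ => C / (k : ℝ)) atTop (nhds 0) :=
    tendsto_const_div_atTop_nhds_zero_nat C
  have h2 : Tendsto (fun k : ℕ => pAtrunc N (k : ℤ) π r s - π r / Z) atTop (nhds 0) :=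
    squeeze_zero_norm' (Filter.eventually_atTop.mpr ⟨N.toNat, key⟩) h1
  simpa using tendsto_sub_nhds_zero_iff.mp h2
end

section
/- As the temperature T → 0⁺, the normalized Boltzmann distribution on a finite state space concentrates on the set of global minimizers of f: for every state r, the probability π̃_T(r) = exp(-f(r)/T) / Σ_{s ∈ S} exp(-f(s)/T) converges to 1/|M| if r ∈ M and to 0 otherwise, where M = {s ∈ S : f(s) = min_{u ∈ S} f(u)}. -/
open Finset Filter

lemma exp_neg_div_tendsto (c : ℝ) (hc : 0 ≤ c) :
    Tendsto (fun T : ℝ => Real.exp (-c / T)) (nhdsWithin 0 (Set.Ioi 0))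
      (nhds (if c = 0 then 1 else 0)) := by
  rcases eq_or_lt_of_le hc with h | h
  · simp [← h]
  · rw [if_neg h.ne']
    have h1 : Tendsto (fun T : ℝ => c / T) (nhdsWithin 0 (Set.Ioi 0)) atTop := by
      simpa [div_eq_mul_inv] using tendsto_inv_nhdsGT_zero.const_mul_atTop h
    have h2 : Tendsto (fun T : ℝ => -c / T) (nhdsWithin 0 (Set.Ioi 0)) atBot := by
      have heq : (fun T : ℝ => -c / T) = fun T => -(c / T) := funext fun T => by ring
      rw [heq]
      exact tendsto_neg_atTop_atBot.comp h1
    exact Real.tendsto_exp_atBot.comp h2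

/-- As T → 0⁺, the normalized Boltzmann distribution concentrates on the set of
global minimizers of f. -/
theorem boltzmann_concentrates_on_minimizers {S : Type*} [Fintype S] [Nonempty S]
    (f : S → ℝ) (r : S) :
    Tendsto
      (fun T : ℝ =>
        Real.exp (-f r / T) / ∑ s : S, Real.exp (-f s / T))
      (nhdsWithin 0 (Set.Ioi 0))
      (nhds (if ∀ u : S, f r ≤ f u
        then (1 : ℝ) / (Finset.univ.filter (fun s : S => ∀ u : S, f s ≤ f u)).card
        else 0)) := by
  obtain ⟨w, -, hw⟩ := Finset.exists_min_image (univ : Finset S) f univ_nonempty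
  have hw' : ∀ u : S, f w ≤ f u := fun u => hw u (mem_univ u)
  have hiff : ∀ s : S, (f s - f w = 0) ↔ (∀ u : S, f s ≤ f u) := by
    intro s
    constructor
    · intro h u
      have : f s = f w := by linarith
      rw [this]; exact hw' u
    · intro h
      have h1 : f s ≤ f w := h w
      have h2 : f w ≤ f s := hw' s
      linarith
  have hnum : Tendsto (fun T : ℝ => Real.exp (-(f r - f w) / T))
      (nhdsWithin 0 (Set.Ioi 0)) (nhds (if f r - f w = 0 then 1 else 0)) :=
    exp_neg_div_tendsto _ (by linarith [hw' r])
  have hden : Tendsto (fun T : ℝ => ∑ s : S, Real.exp (-(f s - f w) / T))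
      (nhdsWithin 0 (Set.Ioi 0))
      (nhds (∑ s : S, if f s - f w = 0 then (1 : ℝ) else 0)) := by
    exact tendsto_finset_sum _ fun s _ => exp_neg_div_tendsto _ (by linarith [hw' s])
  have hDval : (∑ s : S, if f s - f w = 0 then (1 : ℝ) else 0)
      = (Finset.univ.filter (fun s : S => ∀ u : S, f s ≤ f u)).card := by
    rw [Finset.sum_boole]
    have : (Finset.univ.filter (fun s : S => f s - f w = 0))
        = (Finset.univ.filter (fun s : S => ∀ u : S, f s ≤ f u)) :=
      Finset.filter_congr fun s _ => by simp [hiff s]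
    rw [this]
  have hDpos : (0 : ℝ) < ∑ s : S, if f s - f w = 0 then (1 : ℝ) else 0 := by
    rw [hDval]
    have : w ∈ Finset.univ.filter (fun s : S => ∀ u : S, f s ≤ f u) := by
      simp [hw']
    exact_mod_cast Finset.card_pos.mpr ⟨w, this⟩
  have hmain := hnum.div hden hDpos.ne'
  have heq : ∀ T ∈ Set.Ioi (0:ℝ),
      Real.exp (-(f r - f w) / T) / ∑ s : S, Real.exp (-(f s - f w) / T)
        = Real.exp (-f r / T) / ∑ s : S, Real.exp (-f s / T) := by
    intro T hT
    have hT0 : T ≠ 0 := ne_of_gt hT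
    have hterm : ∀ s : S, Real.exp (-(f s - f w) / T)
        = Real.exp (-f s / T) * Real.exp (f w / T) := by
      intro s
      rw [← Real.exp_add]
      ring_nf
    have hsum : (∑ s : S, Real.exp (-(f s - f w) / T))
        = (∑ s : S, Real.exp (-f s / T)) * Real.exp (f w / T) := by
      rw [Finset.sum_mul]
      exact Finset.sum_congr rfl fun s _ => hterm s
    rw [hterm r, hsum, mul_div_mul_right _ _ (Real.exp_ne_zero _)]
  have hfin : ((if f r - f w = 0 then (1:ℝ) else 0)
      / ∑ s : S, if f s - f w = 0 then (1 : ℝ) else 0)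
      = (if ∀ u : S, f r ≤ f u
        then (1 : ℝ) / (Finset.univ.filter (fun s : S => ∀ u : S, f s ≤ f u)).card
        else 0) := by
    rw [hDval]
    by_cases h : ∀ u : S, f r ≤ f u
    · rw [if_pos h, if_pos ((hiff r).mpr h)]
    · rw [if_neg h, if_neg (fun hh => h ((hiff r).mp hh)), zero_div]
  rw [← hfin]
  exact hmain.congr' (eventually_nhdsWithin_of_forall heq)
end
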